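/- arXiv:2111.01438 — 2 statements merged into one kernel-verified Lean document; each statement's English description precedes it below -/
import Mathlib

section
/- Let K be a field and H a K-vector space with a symmetric bilinear form ⟨·,·⟩ such that ⟨x,x⟩ = 0 implies x = 0, there exist u, v ∈ H with ⟨u,u⟩ = ⟨v,v⟩ = 1 and ⟨u,v⟩ = 0, and every nonzero x ∈ H has a scalar multiple w with ⟨w,w⟩ = 1. Then K is formally real: for every n and all α₁,…,α_n ∈ K, if α₁² + ⋯ + α_n² = 0 then α₁ = ⋯ = α_n = 0. Moreover, for every nonzero x ∈ H, ⟨x,x⟩ is the square of a nonzero element of K (hence ⟨x,x⟩ > 0 with respect to any field ordering of K). -/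
/-!
A nonzero vector `x` with `B (α • x) (α • x) = 1` has `B x x = (α⁻¹) ^ 2`. For the orthonormal
pair `u, v` and `a ≠ 0`, the vector `a • u + b • v` is nonzero with `B`-value `a ^ 2 + b ^ 2`,
so this is the square of a nonzero element. By induction every sum of squares is then a square,
and `a ^ 2 + t ^ 2 = 0` forces `a = 0`, which is formal reality.
-/

theorem IsSumSq.isSquare_of_forall_mul_self_add_mul_self_eq {R : Type*} [CommSemiring R]
    (h : ∀ a b : R, a ≠ 0 → ∃ c, c ≠ 0 ∧ a * a + b * b = c * c) {s : R} (hs : IsSumSq s) :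
    IsSquare s := by
  induction hs with
  | zero => exact ⟨0, by simp⟩
  | @sq_add a s _ ih =>
    obtain ⟨t, rfl⟩ := ih
    by_cases ha : a = 0
    · exact ⟨t, by simp [ha]⟩
    · obtain ⟨c, -, hc⟩ := h a t ha
      exact ⟨c, hc⟩

theorem IsFormallyReal.of_forall_mul_self_add_mul_self_eq {R : Type*} [CommSemiring R]
    [NoZeroDivisors R] (h : ∀ a b : R, a ≠ 0 → ∃ c, c ≠ 0 ∧ a * a + b * b = c * c) :
    IsFormallyReal R := by
  refine .of_eq_zero_of_eq_zero_of_mul_self_add fun {s a} hs hsa => ?_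
  obtain ⟨t, rfl⟩ := hs.isSquare_of_forall_mul_self_add_mul_self_eq h
  by_contra ha
  obtain ⟨c, hc, hac⟩ := h a t ha
  exact hc (mul_self_eq_zero.mp (hac ▸ hsa))

theorem IsFormallyReal.eq_zero_of_sum_sq_eq_zero {R ι : Type*} [CommRing R] [IsFormallyReal R]
    {s : Finset ι} {f : ι → R} (h : ∑ i ∈ s, f i ^ 2 = 0) {i : ι} (hi : i ∈ s) : f i = 0 := by
  classical
  rw [← Finset.add_sum_erase s _ hi] at h
  have : f i ^ 2 = 0 :=
    eq_zero_of_add_right (IsSquare.sq (f i)).isSumSq (IsSumSq.sum_sq _ _) h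
  exact IsNilpotent.eq_zero ⟨2, this⟩

namespace LinearMap.BilinForm

variable {K H : Type*} [Field K] [AddCommGroup H] [Module K H] (Q : LinearMap.BilinForm K H)

theorem exists_ne_zero_apply_self_eq_sq {x : H} {α : K} (hα : Q (α • x) (α • x) = 1) :
    ∃ γ : K, γ ≠ 0 ∧ Q x x = γ ^ 2 := by
  simp only [map_smul, smul_apply, smul_eq_mul] at hα
  have hα0 : α ≠ 0 := by rintro rfl; simp at hα
  refine ⟨α⁻¹, inv_ne_zero hα0, ?_⟩
  field_simp
  linear_combination hα

variable {Q} {u v : H} (huu : Q u u = 1) (hvv : Q v v = 1) (huv : Q u v = 0) (hvu : Q v u = 0)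
include huu hvv huv hvu

theorem apply_smul_add_smul_self (a b : K) :
    Q (a • u + b • v) (a • u + b • v) = a * a + b * b := by
  simp only [map_add, map_smul, LinearMap.add_apply, LinearMap.smul_apply, smul_eq_mul,
    huu, hvv, huv, hvu]
  ring

theorem isFormallyReal_of_exists_apply_smul_self_eq_one
    (hnorm : ∀ x : H, x ≠ 0 → ∃ α : K, Q (α • x) (α • x) = 1) : IsFormallyReal K := by
  refine .of_forall_mul_self_add_mul_self_eq fun a b ha => ?_
  have hxu : Q (a • u + b • v) u = a := by
    simp only [map_add, map_smul, LinearMap.add_apply, LinearMap.smul_apply, smul_eq_mul, huu, hvu]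
    ring
  have hx : a • u + b • v ≠ 0 := by
    intro h
    rw [h, map_zero, LinearMap.zero_apply] at hxu
    exact ha hxu.symm
  obtain ⟨α, hα⟩ := hnorm _ hx
  obtain ⟨γ, hγ, hxx⟩ := Q.exists_ne_zero_apply_self_eq_sq hα
  exact ⟨γ, hγ, by rw [← apply_smul_add_smul_self huu hvv huv hvu, hxx, sq]⟩

end LinearMap.BilinForm

theorem stmt_18_general {K : Type*} [Field K] {H : Type*} [AddCommGroup H] [Module K H]
    (B : H → H → K)
    (haddl : ∀ x y z : H, B (x + y) z = B x z + B y z)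
    (hsmull : ∀ (a : K) (x y : H), B (a • x) y = a * B x y)
    (hsymm : ∀ x y : H, B x y = B y x)
    (hpair : ∃ u v : H, B u u = 1 ∧ B v v = 1 ∧ B u v = 0)
    (hunit : ∀ x : H, x ≠ 0 → ∃ α : K, B (α • x) (α • x) = 1) :
    (∀ (n : ℕ) (α : Fin n → K), ∑ i, α i ^ 2 = 0 → ∀ i, α i = 0) ∧
    (∀ x : H, x ≠ 0 → ∃ γ : K, γ ≠ 0 ∧ B x x = γ ^ 2) := by
  let Q : LinearMap.BilinForm K H := LinearMap.mk₂ K B haddl hsmull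
    (fun x y z => by rw [hsymm, haddl, hsymm y, hsymm z])
    (fun a x y => by rw [hsymm, hsmull, hsymm, smul_eq_mul])
  obtain ⟨u, v, huu, hvv, huv⟩ := hpair
  have : IsFormallyReal K :=
    LinearMap.BilinForm.isFormallyReal_of_exists_apply_smul_self_eq_one (Q := Q) huu hvv huv
      (by rw [← huv]; exact hsymm v u) hunit
  refine ⟨fun n α hα i => IsFormallyReal.eq_zero_of_sum_sq_eq_zero hα (Finset.mem_univ i),
    fun x hx => ?_⟩
  obtain ⟨α, hα⟩ := hunit x hx
  exact Q.exists_ne_zero_apply_self_eq_sq hα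

theorem stmt_18 {K : Type*} [Field K] {H : Type*} [AddCommGroup H] [Module K H]
    (B : H → H → K)
    (haddl : ∀ x y z : H, B (x + y) z = B x z + B y z)
    (hsmull : ∀ (a : K) (x y : H), B (a • x) y = a * B x y)
    (hsymm : ∀ x y : H, B x y = B y x)
    (haniso : ∀ x : H, B x x = 0 → x = 0)
    (hpair : ∃ u v : H, B u u = 1 ∧ B v v = 1 ∧ B u v = 0)
    (hunit : ∀ x : H, x ≠ 0 → ∃ α : K, B (α • x) (α • x) = 1) :
    (∀ (n : ℕ) (α : Fin n → K), ∑ i, α i ^ 2 = 0 → ∀ i, α i = 0) ∧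
    (∀ x : H, x ≠ 0 → ∃ γ : K, γ ≠ 0 ∧ B x x = γ ^ 2) :=
  stmt_18_general B haddl hsmull hsymm hpair hunit
end

section
/- Let K be a linearly ordered field and H a K-vector space with a symmetric bilinear form ⟨·,·⟩ that is positive definite (⟨x,x⟩ > 0 for all x ≠ 0), such that every nonzero x ∈ H has a scalar multiple w with ⟨w,w⟩ = 1 and there exist u, v ∈ H with ⟨u,u⟩ = ⟨v,v⟩ = 1 and ⟨u,v⟩ = 0. Call α ∈ K infinitesimal if |α| < 1/n for every positive integer n, and finite if |α| < n for some positive integer n; call x ∈ H infinitesimal (resp. finite) if ⟨x,x⟩ is. For nonzero x, y ∈ H define x ≈ y if there are α, β ∈ K such that αx and βy are finite and not infinitesimal and αx − βy is infinitesimal. Then: (i) ≈ is reflexive, symmetric and transitive on the nonzero vectors of H, and (for all nonzero x, y: x ≈ y implies y is a scalar multiple of x) holds if and only if K is Archimedean, i.e., 0 is the only infinitesimal element of K; (ii) if x, y are nonzero with ⟨x,y⟩ = 0, then x ≈ y fails; (iii) for every linear bijection U of H with ⟨Ux,Uy⟩ = ⟨x,y⟩ for all x,y, and all nonzero x, y ∈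 H: x ≈ y if and only if Ux ≈ Uy. -/
/-- An element of an ordered field is infinitesimal if its absolute value is
below `1/n` for every positive integer `n`. -/
def Infml {K : Type*} [Field K] [LinearOrder K] [IsStrictOrderedRing K] (α : K) : Prop :=
  ∀ n : ℕ, 0 < n → |α| < 1 / (n : K)

/-- An element of an ordered field is finite if its absolute value is below
some positive integer `n`. -/
def Finl {K : Type*} [Field K] [LinearOrder K] [IsStrictOrderedRing K] (α : K) : Prop :=
  ∃ n : ℕ, 0 < n ∧ |α| < (n : K)

/-- `x ≈ y`: some scalar multiples of `x` and `y` are finite, not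
infinitesimal, and differ by an infinitesimal vector (lengths measured by the
form `B`). -/
def ApproxRel {K : Type*} [Field K] [LinearOrder K] [IsStrictOrderedRing K] {H : Type*} [AddCommGroup H]
    [Module K H] (B : H → H → K) (x y : H) : Prop :=
  ∃ α β : K,
    (Finl (B (α • x) (α • x)) ∧ ¬ Infml (B (α • x) (α • x))) ∧
    (Finl (B (β • y) (β • y)) ∧ ¬ Infml (B (β • y) (β • y))) ∧
    Infml (B (α • x - β • y) (α • x - β • y))

/-! Infinitesimal vectors are stable under sums and under multiplication by finite scalars
(Cauchy–Schwarz bounds the cross terms), which makes `≈` transitive after rescaling one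
witness of the second relation to match the first. If `K` has an infinitesimal `ε ≠ 0`,
then `u ≈ u - ε v` for an orthonormal pair `u, v`, although `u - ε v` is not a multiple
of `u`; if `K` is Archimedean, an infinitesimal vector is zero, so `αx = βy`.
Orthogonal vectors are never close since `αx - βy` is at least as long as `αx`, and
isometries preserve everything in the definition of `≈`. -/

section OrderedField

variable {K : Type*} [Field K] [LinearOrder K] [IsStrictOrderedRing K]

def Appreciable (a : K) : Prop := Finl a ∧ ¬ Infml a

theorem infml_zero : Infml (0 : K) := fun n hn => by
  simpa using one_div_pos.mpr (Nat.cast_pos.mpr hn : (0 : K) < n)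

theorem not_infml_one : ¬ Infml (1 : K) := fun h => by
  simpa using h 1 one_pos

theorem finl_one : Finl (1 : K) := ⟨2, two_pos, by norm_num⟩

theorem Infml.mono {a b : K} (hb : Infml b) (h : |a| ≤ |b|) : Infml a :=
  fun n hn => h.trans_lt (hb n hn)

theorem Infml.neg {a : K} (h : Infml a) : Infml (-a) :=
  h.mono (abs_neg a).le

theorem Infml.add {a b : K} (ha : Infml a) (hb : Infml b) : Infml (a + b) := by
  intro n hn
  have hn' : (0 : K) < n := Nat.cast_pos.mpr hn
  have h2n : ((2 * n : ℕ) : K) = 2 * n := by push_cast; ring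
  have ha' := ha (2 * n) (by omega)
  have hb' := hb (2 * n) (by omega)
  rw [h2n] at ha' hb'
  calc |a + b| ≤ |a| + |b| := abs_add_le a b
    _ < 1 / (2 * n) + 1 / (2 * n) := add_lt_add ha' hb'
    _ = 1 / n := by field_simp; norm_num

theorem Infml.sub {a b : K} (ha : Infml a) (hb : Infml b) : Infml (a - b) :=
  sub_eq_add_neg a b ▸ ha.add hb.neg

theorem Infml.finl {a : K} (h : Infml a) : Finl a :=
  ⟨1, one_pos, by simpa using h 1 one_pos⟩

theorem Finl.add {a b : K} (ha : Finl a) (hb : Finl b) : Finl (a + b) := by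
  obtain ⟨n, hn, han⟩ := ha
  obtain ⟨m, hm, hbm⟩ := hb
  refine ⟨n + m, by omega, ?_⟩
  push_cast
  exact (abs_add_le a b).trans_lt (add_lt_add han hbm)

theorem Finl.mul_infml {a b : K} (ha : Finl a) (hb : Infml b) : Infml (a * b) := by
  obtain ⟨m, hm, ham⟩ := ha
  intro n hn
  have hm' : (0 : K) < m := Nat.cast_pos.mpr hm
  have hn' : (0 : K) < n := Nat.cast_pos.mpr hn
  have hb' := hb (m * n) (Nat.mul_pos hm hn)
  push_cast at hb'
  rw [abs_mul]
  calc |a| * |b| < m * (1 / (m * n)) := mul_lt_mul'' ham hb' (abs_nonneg a) (abs_nonneg b)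
    _ = 1 / n := by field_simp

theorem Infml.of_mul_self {a : K} (h : Infml (a * a)) : Infml a := by
  intro n hn
  by_contra! hc
  have hn' : (0 : K) < n := Nat.cast_pos.mpr hn
  have h' := h (n * n) (Nat.mul_pos hn hn)
  push_cast at h'
  rw [abs_mul, ← one_div_mul_one_div] at h'
  exact h'.not_ge (mul_le_mul hc hc (one_div_pos.mpr hn').le (abs_nonneg a))

theorem Finl.div {a b : K} (ha : Finl a) (hb : ¬ Infml b) : Finl (a / b) := by
  obtain ⟨N, hN, haN⟩ := ha
  simp only [Infml, not_forall, not_lt] at hb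
  obtain ⟨m, hm, hbm⟩ := hb
  have hm' : (0 : K) < m := Nat.cast_pos.mpr hm
  have hb0 : 0 < |b| := (one_div_pos.mpr hm').trans_le hbm
  have hmb : 1 ≤ m * |b| := by rwa [div_le_iff₀' hm'] at hbm
  refine ⟨N * m, Nat.mul_pos hN hm, ?_⟩
  push_cast
  rw [abs_div, div_lt_iff₀ hb0]
  nlinarith [abs_nonneg a]

theorem Appreciable.one : Appreciable (1 : K) := ⟨finl_one, not_infml_one⟩

theorem Appreciable.ne_zero {a : K} (h : Appreciable a) : a ≠ 0 := by
  rintro rfl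
  exact h.2 infml_zero

theorem Appreciable.add_infml {a b : K} (ha : Appreciable a) (hb : Infml b) :
    Appreciable (a + b) :=
  ⟨ha.1.add hb.finl, fun hab => ha.2 (by simpa using hab.sub hb)⟩

end OrderedField

namespace LinearMap.BilinForm

variable {K : Type*} [Field K] [LinearOrder K] [IsStrictOrderedRing K]
  {H : Type*} [AddCommGroup H] [Module K H] {B : LinearMap.BilinForm K H}

theorem infml_apply_of_finl_of_infml (hB : B.IsPosSemidef) {a b : H} (ha : Finl (B a a))
    (hb : Infml (B b b)) : Infml (B a b) := by
  refine Infml.of_mul_self ((ha.mul_infml hb).mono ?_)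
  rw [abs_mul_self, abs_of_nonneg (mul_nonneg (hB.nonneg a) (hB.nonneg b))]
  simpa [sq] using
    apply_sq_le_of_symm B hB.nonneg (isSymm_iff.mp hB.isSymm) a b

theorem infml_apply_add_self (hB : B.IsPosSemidef) {a b : H} (ha : Infml (B a a))
    (hb : Infml (B b b)) : Infml (B (a + b) (a + b)) := by
  simp only [map_add, LinearMap.add_apply]
  exact (ha.add (infml_apply_of_finl_of_infml hB hb.finl ha)).add
    ((infml_apply_of_finl_of_infml hB ha.finl hb).add hb)

theorem appreciable_apply_sub_self (hB : B.IsPosSemidef) {a d : H}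
    (ha : Appreciable (B a a)) (hd : Infml (B d d)) : Appreciable (B (a - d) (a - d)) := by
  have had := infml_apply_of_finl_of_infml hB ha.1 hd
  have hexpand : B (a - d) (a - d) = B a a + (-B a d - B d a + B d d) := by
    simp only [map_sub, LinearMap.sub_apply]
    ring
  rw [hexpand, ← hB.isSymm.eq a d]
  exact ha.add_infml ((had.neg.sub had).add hd)

end LinearMap.BilinForm

open LinearMap.BilinForm

section ApproxRel

variable {K : Type*} [Field K] [LinearOrder K] [IsStrictOrderedRing K]
  {H : Type*} [AddCommGroup H] [Module K H] {B : LinearMap.BilinForm K H}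

theorem approxRel_iff {x y : H} :
    ApproxRel (B · ·) x y ↔ ∃ α β : K, Appreciable (B (α • x) (α • x)) ∧
      Appreciable (B (β • y) (β • y)) ∧ Infml (B (α • x - β • y) (α • x - β • y)) :=
  Iff.rfl

theorem approxRel_self_of_appreciable {x : H} {α : K} (h : Appreciable (B (α • x) (α • x))) :
    ApproxRel (B · ·) x x :=
  approxRel_iff.mpr ⟨α, α, h, h, by simpa using infml_zero⟩

theorem ApproxRel.symm {x y : H} (h : ApproxRel (B · ·) x y) : ApproxRel (B · ·) y x := by
  obtain ⟨α, β, hx, hy, hd⟩ := approxRel_iff.mp h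
  refine approxRel_iff.mpr ⟨β, α, hy, hx, ?_⟩
  rwa [← neg_sub, map_neg, map_neg, LinearMap.neg_apply, neg_neg]

theorem ApproxRel.trans (hB : B.IsPosSemidef) {x y z : H} (hxy : ApproxRel (B · ·) x y)
    (hyz : ApproxRel (B · ·) y z) : ApproxRel (B · ·) x z := by
  obtain ⟨α₁, β₁, hx, hy₁, hd₁⟩ := approxRel_iff.mp hxy
  obtain ⟨α₂, β₂, hy₂, -, hd₂⟩ := approxRel_iff.mp hyz
  have hα₂ : α₂ ≠ 0 := by
    rintro rfl
    exact hy₂.ne_zero (by simp)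
  set c := β₁ / α₂
  have hcy : c • α₂ • y = β₁ • y := by rw [smul_smul, div_mul_cancel₀ _ hα₂]
  have hc : Finl (c * c) := by
    have hcc : B (β₁ • y) (β₁ • y) = c * c * B (α₂ • y) (α₂ • y) := by
      rw [← hcy]
      simp only [map_smul, LinearMap.smul_apply, smul_eq_mul]
      ring
    rw [eq_div_of_mul_eq hy₂.ne_zero hcc.symm]
    exact hy₁.1.div hy₂.2
  have hcd : Infml (B (c • (α₂ • y - β₂ • z)) (c • (α₂ • y - β₂ • z))) := by
    simpa only [map_smul, LinearMap.smul_apply, smul_eq_mul, mul_assoc] using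
      hc.mul_infml hd₂
  have hz' : (c * β₂) • z = β₁ • y - c • (α₂ • y - β₂ • z) := by
    rw [smul_sub, hcy, mul_smul]
    abel
  have hd' : α₁ • x - (c * β₂) • z = (α₁ • x - β₁ • y) + c • (α₂ • y - β₂ • z) := by
    rw [hz']
    abel
  refine approxRel_iff.mpr ⟨α₁, c * β₂, hx, ?_, ?_⟩
  · rw [hz']
    exact appreciable_apply_sub_self hB hy₁ hcd
  · rw [hd']
    exact infml_apply_add_self hB hd₁ hcd

theorem not_approxRel_of_apply_eq_zero (hB : B.IsPosSemidef) {x y : H} (hxy : B x y = 0) :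
    ¬ ApproxRel (B · ·) x y := by
  intro h
  obtain ⟨α, β, hx, -, hd⟩ := approxRel_iff.mp h
  have hyx : B y x = 0 := by rw [hB.isSymm.eq, hxy]
  have hexpand :
      B (α • x - β • y) (α • x - β • y) = B (α • x) (α • x) + B (β • y) (β • y) := by
    simp [hxy, hyx]
  refine hx.2 (hd.mono ?_)
  rw [hexpand, abs_of_nonneg (hB.nonneg _),
    abs_of_nonneg (add_nonneg (hB.nonneg _) (hB.nonneg _))]
  exact le_add_of_nonneg_right (hB.nonneg _)

theorem ApproxRel.exists_eq_smul (hpos : ∀ x, x ≠ 0 → 0 < B x x)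
    (hK : ∀ α : K, Infml α → α = 0) {x y : H} (h : ApproxRel (B · ·) x y) :
    ∃ c : K, y = c • x := by
  obtain ⟨α, β, -, hy, hd⟩ := approxRel_iff.mp h
  have hβ : β ≠ 0 := by
    rintro rfl
    exact hy.ne_zero (by simp)
  have hxy : α • x = β • y := by
    by_contra hne
    exact (hpos _ (sub_ne_zero.mpr hne)).ne' (hK _ hd)
  exact ⟨β⁻¹ * α, by rw [mul_smul, hxy, inv_smul_smul₀ hβ]⟩

theorem approxRel_sub_smul (hB : B.IsPosSemidef) {u v : H} (hu : B u u = 1) (hv : B v v = 1)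
    {ε : K} (hε : Infml ε) : ApproxRel (B · ·) u (u - ε • v) := by
  have hεv : Infml (B (ε • v) (ε • v)) := by
    simpa [hv] using hε.finl.mul_infml hε
  refine approxRel_iff.mpr ⟨1, 1, ?_, ?_, ?_⟩
  · simpa [hu] using Appreciable.one
  · simpa using appreciable_apply_sub_self hB (hu ▸ Appreciable.one) hεv
  · simpa using hεv

theorem forall_approxRel_imp_exists_eq_smul_iff (hB : B.IsPosSemidef)
    (hpos : ∀ x, x ≠ 0 → 0 < B x x) {u v : H} (hu : B u u = 1) (hv : B v v = 1)
    (huv : B u v = 0) :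
    (∀ x y : H, x ≠ 0 → y ≠ 0 → ApproxRel (B · ·) x y → ∃ c : K, y = c • x) ↔
      ∀ α : K, Infml α → α = 0 := by
  refine ⟨fun h ε hε => ?_, fun hK x y _ _ => ApproxRel.exists_eq_smul hpos hK⟩
  have hεv : B (u - ε • v) v = -ε := by simp [huv, hv]
  have hu0 : u ≠ 0 := by
    rintro rfl
    simp at hu
  by_contra hε0
  have hy0 : u - ε • v ≠ 0 := by
    intro h0
    simp [h0, hε0, eq_comm] at hεv
  obtain ⟨c, hc⟩ := h u _ hu0 hy0 (approxRel_sub_smul hB hu hv hε)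
  simp [hc, huv, hε0, eq_comm] at hεv

theorem approxRel_map_iff {H' : Type*} [AddCommGroup H'] [Module K H']
    {B' : LinearMap.BilinForm K H'} (U : H →ₗ[K] H') (hU : ∀ x y, B' (U x) (U y) = B x y)
    {x y : H} : ApproxRel (B' · ·) (U x) (U y) ↔ ApproxRel (B · ·) x y := by
  simp only [approxRel_iff, ← map_smul, ← map_sub, hU]

end ApproxRel

theorem stmt_19 {K : Type*} [Field K] [LinearOrder K] [IsStrictOrderedRing K] {H : Type*} [AddCommGroup H]
    [Module K H] (B : H → H → K)
    (haddl : ∀ x y z : H, B (x + y) z = B x z + B y z)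
    (hsmull : ∀ (a : K) (x y : H), B (a • x) y = a * B x y)
    (hsymm : ∀ x y : H, B x y = B y x)
    (hpos : ∀ x : H, x ≠ 0 → 0 < B x x)
    (hunit : ∀ x : H, x ≠ 0 → ∃ α : K, B (α • x) (α • x) = 1)
    (hpair : ∃ u v : H, B u u = 1 ∧ B v v = 1 ∧ B u v = 0) :
    -- (i)
    ((∀ x : H, x ≠ 0 → ApproxRel B x x) ∧
     (∀ x y : H, x ≠ 0 → y ≠ 0 → ApproxRel B x y → ApproxRel B y x) ∧
     (∀ x y z : H, x ≠ 0 → y ≠ 0 → z ≠ 0 →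
       ApproxRel B x y → ApproxRel B y z → ApproxRel B x z) ∧
     ((∀ x y : H, x ≠ 0 → y ≠ 0 → ApproxRel B x y → ∃ c : K, y = c • x) ↔
       (∀ α : K, Infml α → α = 0))) ∧
    -- (ii)
    (∀ x y : H, x ≠ 0 → y ≠ 0 → B x y = 0 → ¬ ApproxRel B x y) ∧
    -- (iii)
    (∀ U : H →ₗ[K] H, Function.Bijective U →
      (∀ x y : H, B (U x) (U y) = B x y) →
      ∀ x y : H, x ≠ 0 → y ≠ 0 → (ApproxRel B x y ↔ ApproxRel B (U x) (U y))) := by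
  let F : LinearMap.BilinForm K H := LinearMap.mk₂ K B haddl hsmull
    (fun x y z => by rw [hsymm, haddl, hsymm y, hsymm z])
    (fun a x y => by rw [smul_eq_mul, hsymm, hsmull, hsymm])
  have hF : F.IsPosSemidef :=
    ⟨⟨hsymm⟩, ⟨fun x => (eq_or_ne x 0).elim (fun h => by simp [h]) (fun h => (hpos x h).le)⟩⟩
  obtain ⟨u, v, hu, hv, huv⟩ := hpair
  refine ⟨⟨fun x hx => ?_, fun x y _ _ => ApproxRel.symm (B := F),
    fun x y z _ _ _ => ApproxRel.trans (B := F) hF,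
    forall_approxRel_imp_exists_eq_smul_iff (B := F) hF hpos hu hv huv⟩,
    fun x y _ _ => not_approxRel_of_apply_eq_zero (B := F) hF,
    fun U _ hU x y _ _ => (approxRel_map_iff (B := F) (B' := F) U hU).symm⟩
  obtain ⟨α, hα⟩ := hunit x hx
  exact approxRel_self_of_appreciable (B := F)
    (hα ▸ Appreciable.one : Appreciable (B (α • x) (α • x)))
end
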